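/- arXiv:2310.11968 — 5 statements merged into one kernel-verified Lean document; each statement's English description precedes it below -/
import Mathlib

section
/- Let f : M → N be a smooth map between smooth manifolds. Then f is a submersion (its differential is surjective at every point of M) if and only if f has the following pointed lifting property: for every natural number k, every open set 𝖴 ⊆ ℝ^k, every point r ∈ 𝖴, every smooth map p : 𝖴 → N, and every x ∈ M with f(x) = p(r), there exist an open neighborhood 𝖴' ⊆ 𝖴 of r and a smooth map q : 𝖴' → M with q(r) = x and f(q(r')) = p(r') for all r' ∈ 𝖴'. -/
open scoped Manifold Topology
open Set

/-! In charts, precomposing a submersion with an affine map along a right inverse of its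
derivative at a point produces a map with invertible derivative; the inverse function theorem
then yields a smooth local section through every point, and composing a plot with such a section
lifts it. Conversely, lifting the inverse `ψ⁻¹` of a chart at `f x` through `x` gives a smooth
`q` with `f ∘ q = ψ⁻¹` near `ψ (f x)`, so by the chain rule `mfderiv f x` has a right inverse. -/

section LocalInverse

variable {𝕂 : Type*} [RCLike 𝕂] {E F : Type*} [NormedAddCommGroup E] [NormedSpace 𝕂 E]
  [NormedAddCommGroup F] [NormedSpace 𝕂 F] {n : WithTop ℕ∞}

theorem ContDiffOn.exists_localInverse [CompleteSpace E] {f : E → F} {V : Set E}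
    (hf : ContDiffOn 𝕂 n f V) (hV : IsOpen V) (hn : 1 ≤ n) {a : E} (ha : a ∈ V)
    {f' : E ≃L[𝕂] F} (hf' : HasFDerivAt f (f' : E →L[𝕂] F) a) :
    ∃ W : Set F, IsOpen W ∧ f a ∈ W ∧ ∃ g : F → E, ContDiffOn 𝕂 n g W ∧ g (f a) = a ∧
      MapsTo g W V ∧ ∀ z ∈ W, f (g z) = z := by
  have hn₀ : n ≠ 0 := (zero_lt_one.trans_le hn).ne'
  have hfa := hf.contDiffAt (hV.mem_nhds ha)
  set Φ := hfa.toOpenPartialHomeomorph f hf' hn₀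
  have haΦ : a ∈ Φ.source := hfa.mem_toOpenPartialHomeomorph_source hf' hn₀
  have hΦa : Φ.symm (f a) = a := Φ.left_inv haΦ
  -- where the derivative is still invertible, `Φ.symm` is as smooth as `f`
  set S := Φ.source ∩ (V ∩ fderiv 𝕂 f ⁻¹' range ((↑) : (E ≃L[𝕂] F) → E →L[𝕂] F))
  have hS : IsOpen S := Φ.open_source.inter <|
    (hf.continuousOn_fderiv_of_isOpen hV hn).isOpen_inter_preimage hV ContinuousLinearEquiv.isOpen
  refine ⟨Φ.target ∩ Φ.symm ⁻¹' S, Φ.isOpen_inter_preimage_symm hS, ?_, Φ.symm, ?_, ?_, ?_, ?_⟩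
  · refine ⟨Φ.map_source haΦ, ?_⟩
    rw [mem_preimage, hΦa]
    exact ⟨haΦ, ha, f', hf'.fderiv.symm⟩
  · rintro z ⟨hz, -, hzV, e, he⟩
    have hfz := hf.contDiffAt (hV.mem_nhds hzV)
    refine (Φ.contDiffAt_symm hz (f₀' := e) ?_ hfz).contDiffWithinAt
    rw [he]
    exact (hfz.differentiableAt hn₀).hasFDerivAt
  · exact hΦa
  · exact fun z hz ↦ hz.2.2.1
  · exact fun z hz ↦ Φ.right_inv hz.1

theorem ContDiffOn.exists_localSection [CompleteSpace F] {G : E → F} {V : Set E}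
    (hG : ContDiffOn 𝕂 n G V) (hV : IsOpen V) (hn : 1 ≤ n) {a : E} (ha : a ∈ V)
    (hG' : (fderiv 𝕂 G a).HasRightInverse) :
    ∃ W : Set F, IsOpen W ∧ G a ∈ W ∧ ∃ s : F → E, ContDiffOn 𝕂 n s W ∧ s (G a) = a ∧
      MapsTo s W V ∧ ∀ z ∈ W, G (s z) = z := by
  obtain ⟨A, hA⟩ := hG'
  -- restricting `G` to the affine slice `a + range A` gives a map `F → F` with derivative `id`
  set ι : F → E := fun y ↦ a + A y
  have hι : ContDiff 𝕂 n ι := contDiff_const.add A.contDiff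
  have hι0 : ι 0 = a := by simp [ι]
  have hH : ContDiffOn 𝕂 n (G ∘ ι) (ι ⁻¹' V) := hG.comp hι.contDiffOn (mapsTo_preimage _ _)
  have hH' : HasFDerivAt (G ∘ ι) (ContinuousLinearEquiv.refl 𝕂 F : F →L[𝕂] F) 0 := by
    have hGa : HasFDerivAt G (fderiv 𝕂 G a) (ι 0) := hι0 ▸
      ((hG.contDiffAt (hV.mem_nhds ha)).differentiableAt (zero_lt_one.trans_le hn).ne').hasFDerivAt
    convert hGa.comp 0 (A.hasFDerivAt.const_add a)
    ext y
    exact (hA y).symm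
  obtain ⟨W, hW, hGW, g, hg, hg0, hgV, hHg⟩ :=
    hH.exists_localInverse (hV.preimage hι.continuous) hn (show ι 0 ∈ V from hι0 ▸ ha) hH'
  rw [Function.comp_apply, hι0] at hGW hg0
  exact ⟨W, hW, hGW, ι ∘ g, hι.comp_contDiffOn hg, by rw [Function.comp_apply, hg0, hι0],
    hgV, hHg⟩

end LocalInverse

section Manifold

variable {𝕂 : Type*} [RCLike 𝕂]
  {E : Type*} [NormedAddCommGroup E] [NormedSpace 𝕂 E] {H : Type*} [TopologicalSpace H]
  {I : ModelWithCorners 𝕂 E H}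
  {M : Type*} [TopologicalSpace M] [ChartedSpace H M]
  {E' : Type*} [NormedAddCommGroup E'] [NormedSpace 𝕂 E'] {H' : Type*} [TopologicalSpace H']
  {J : ModelWithCorners 𝕂 E' H'}
  {N : Type*} [TopologicalSpace N] [ChartedSpace H' N]
  {E'' : Type*} [NormedAddCommGroup E''] [NormedSpace 𝕂 E''] {H'' : Type*} [TopologicalSpace H'']
  {K : ModelWithCorners 𝕂 E'' H''} {P : Type*} [TopologicalSpace P] [ChartedSpace H'' P]
  {n : WithTop ℕ∞}

theorem ContMDiff.exists_contMDiffOn_localSection [I.Boundaryless] [FiniteDimensional 𝕂 E']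
    [IsManifold I n M] [IsManifold J n N] {f : M → N} (hf : ContMDiff I J n f) (hn : 1 ≤ n) {x : M}
    (hx : Function.Surjective (mfderiv I J f x)) :
    ∃ T : Set N, IsOpen T ∧ f x ∈ T ∧ ∃ σ : N → M, ContMDiffOn J I n σ T ∧ σ (f x) = x ∧
      ∀ y ∈ T, f (σ y) = y := by
  set φ := extChartAt I x
  set ψ := extChartAt J (f x)
  set V := φ.target ∩ φ.symm ⁻¹' (f ⁻¹' ψ.source)
  have hV : IsOpen V := (continuousOn_extChartAt_symm x).isOpen_inter_preimage
    (isOpen_extChartAt_target x) ((isOpen_extChartAt_source (f x)).preimage hf.continuous)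
  have hxV : φ x ∈ V := by
    refine ⟨mem_extChartAt_target x, ?_⟩
    simp [φ, ψ]
  have hfV : ContDiffOn 𝕂 n (ψ ∘ f ∘ φ.symm) V := (contMDiff_iff.1 hf).2 x (f x)
  have hfx' : fderiv 𝕂 (ψ ∘ f ∘ φ.symm) (φ x) = mfderiv I J f x := by
    rw [((hf x).mdifferentiableAt (zero_lt_one.trans_le hn).ne').mfderiv, I.range_eq_univ,
      fderivWithin_univ]
    rfl
  have : CompleteSpace E' := FiniteDimensional.complete 𝕂 E'
  obtain ⟨W, hW, hfxW, s, hs, hsx, hsV, hfs⟩ :=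
    hfV.exists_localSection hV hn hxV (.of_surjective_of_finiteDimensional (hfx' ▸ hx))
  have hφx : φ.symm (φ x) = x := φ.left_inv (mem_extChartAt_source x)
  refine ⟨ψ.source ∩ ψ ⁻¹' W, isOpen_extChartAt_preimage' (f x) hW, ?_, φ.symm ∘ s ∘ ψ, ?_, ?_, ?_⟩
  · refine ⟨mem_extChartAt_source (f x), ?_⟩
    simpa [hφx] using hfxW
  · have hψ : ContMDiffOn J 𝓘(𝕂, E') n ψ ψ.source := by
      simpa only [ψ, extChartAt_source] using contMDiffOn_extChartAt
    exact (contMDiffOn_extChartAt_symm x).comp (hs.contMDiffOn.comp (hψ.mono inter_subset_left)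
      fun y hy ↦ hy.2) fun y hy ↦ (hsV hy.2).1
  · have : ψ (f x) = (ψ ∘ f ∘ φ.symm) (φ x) := by simp only [Function.comp_apply, hφx]
    rw [Function.comp_apply, Function.comp_apply, this, hsx, hφx]
  · rintro y ⟨hy, hyW⟩
    exact ψ.injOn (hsV hyW).2 hy (hfs _ hyW)

theorem ContMDiff.exists_contMDiffOn_lift [I.Boundaryless] [FiniteDimensional 𝕂 E']
    [IsManifold I n M] [IsManifold J n N] {f : M → N} (hf : ContMDiff I J n f) (hn : 1 ≤ n) {x : M}
    (hx : Function.Surjective (mfderiv I J f x)) {p : P → N} {U : Set P} {r : P} (hU : IsOpen U)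
    (hr : r ∈ U) (hp : ContMDiffOn K J n p U) (hpr : f x = p r) :
    ∃ U' ⊆ U, IsOpen U' ∧ r ∈ U' ∧ ∃ q : P → M, ContMDiffOn K I n q U' ∧ q r = x ∧
      ∀ r' ∈ U', f (q r') = p r' := by
  obtain ⟨T, hT, hxT, σ, hσ, hσx, hfσ⟩ := hf.exists_contMDiffOn_localSection hn hx
  refine ⟨U ∩ p ⁻¹' T, inter_subset_left, hp.continuousOn.isOpen_inter_preimage hU hT,
    ⟨hr, show p r ∈ T from hpr ▸ hxT⟩, σ ∘ p, hσ.comp (hp.mono inter_subset_left) fun _ h ↦ h.2, ?_,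
    fun r' hr' ↦ hfσ _ hr'.2⟩
  rw [Function.comp_apply, ← hpr, hσx]

theorem surjective_mfderiv_of_comp_eventuallyEq {f : M → N} {q : P → M} {g : P → N} {r : P}
    (hf : MDifferentiableAt I J f (q r)) (hq : MDifferentiableAt K I q r)
    (hfq : f ∘ q =ᶠ[𝓝 r] g) (hg : Function.Surjective (mfderiv K J g r)) :
    Function.Surjective (mfderiv I J f (q r)) := by
  rw [← hfq.mfderiv_eq, mfderiv_comp r hf hq] at hg
  intro v
  obtain ⟨w, hw⟩ := hg v
  exact ⟨mfderiv K I q r w, hw⟩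

theorem surjective_mfderiv_extChartAt_symm [J.Boundaryless] [IsManifold J 1 N] (y : N) :
    Function.Surjective (mfderiv 𝓘(𝕂, E') J (extChartAt J y).symm (extChartAt J y y)) := by
  have h := mfderivWithin_range_extChartAt_symm (I := J) (x := y)
  rw [J.range_eq_univ, mfderivWithin_univ] at h
  rw [h]
  exact Function.surjective_id

end Manifold

theorem submersion_iff_local_subduction_general
    {m n : ℕ}
    {M : Type*} [TopologicalSpace M] [ChartedSpace (EuclideanSpace ℝ (Fin m)) M]
    [IsManifold (𝓡 m) (⊤ : ℕ∞) M]
    {N : Type*} [TopologicalSpace N] [ChartedSpace (EuclideanSpace ℝ (Fin n)) N]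
    [IsManifold (𝓡 n) (⊤ : ℕ∞) N]
    (f : M → N) (hf : ContMDiff (𝓡 m) (𝓡 n) (⊤ : ℕ∞) f) :
    (∀ x : M, Function.Surjective (mfderiv (𝓡 m) (𝓡 n) f x)) ↔
    (∀ (k : ℕ) (U : Set (EuclideanSpace ℝ (Fin k))) (r : EuclideanSpace ℝ (Fin k))
      (p : EuclideanSpace ℝ (Fin k) → N) (x : M),
      IsOpen U → r ∈ U → ContMDiffOn (𝓡 k) (𝓡 n) (⊤ : ℕ∞) p U → f x = p r →
      ∃ U' : Set (EuclideanSpace ℝ (Fin k)), U' ⊆ U ∧ IsOpen U' ∧ r ∈ U' ∧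
        ∃ q : EuclideanSpace ℝ (Fin k) → M,
          ContMDiffOn (𝓡 k) (𝓡 m) (⊤ : ℕ∞) q U' ∧ q r = x ∧ ∀ r' ∈ U', f (q r') = p r') := by
  have hn : (1 : WithTop ℕ∞) ≤ (⊤ : ℕ∞) := by exact_mod_cast le_top
  refine ⟨fun hsurj k U r p x hU hr hp hpr ↦ hf.exists_contMDiffOn_lift hn (hsurj x) hU hr hp hpr,
    fun hlift x ↦ ?_⟩
  set ψ := extChartAt (𝓡 n) (f x)
  obtain ⟨U', -, hU', hrU', q, hq, hqx, hfq⟩ := hlift n ψ.target (ψ (f x)) ψ.symm x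
    (isOpen_extChartAt_target (f x)) (mem_extChartAt_target (f x))
    (contMDiffOn_extChartAt_symm (f x)) (ψ.left_inv (mem_extChartAt_source (f x))).symm
  rw [← hqx]
  exact surjective_mfderiv_of_comp_eventuallyEq (hf.mdifferentiableAt (by simp))
    ((hq.contMDiffAt (hU'.mem_nhds hrU')).mdifferentiableAt (by simp))
    (Filter.eventuallyEq_of_mem (hU'.mem_nhds hrU') hfq) (surjective_mfderiv_extChartAt_symm (f x))

/-- A smooth map between manifolds is a submersion if and only if it has the
pointed lifting property for smooth plots (i.e. it is a local subduction). -/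
theorem submersion_iff_local_subduction
    {m n : ℕ}
    {M : Type*} [TopologicalSpace M] [ChartedSpace (EuclideanSpace ℝ (Fin m)) M]
    [IsManifold (𝓡 m) (⊤ : ℕ∞) M] [T2Space M] [SecondCountableTopology M]
    {N : Type*} [TopologicalSpace N] [ChartedSpace (EuclideanSpace ℝ (Fin n)) N]
    [IsManifold (𝓡 n) (⊤ : ℕ∞) N] [T2Space N] [SecondCountableTopology N]
    (f : M → N) (hf : ContMDiff (𝓡 m) (𝓡 n) (⊤ : ℕ∞) f) :
    (∀ x : M, Function.Surjective (mfderiv (𝓡 m) (𝓡 n) f x)) ↔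
    (∀ (k : ℕ) (U : Set (EuclideanSpace ℝ (Fin k))) (r : EuclideanSpace ℝ (Fin k))
      (p : EuclideanSpace ℝ (Fin k) → N) (x : M),
      IsOpen U → r ∈ U → ContMDiffOn (𝓡 k) (𝓡 n) (⊤ : ℕ∞) p U → f x = p r →
      ∃ U' : Set (EuclideanSpace ℝ (Fin k)), U' ⊆ U ∧ IsOpen U' ∧ r ∈ U' ∧
        ∃ q : EuclideanSpace ℝ (Fin k) → M,
          ContMDiffOn (𝓡 k) (𝓡 m) (⊤ : ℕ∞) q U' ∧ q r = x ∧ ∀ r' ∈ U', f (q r') = p r') :=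
  submersion_iff_local_subduction_general f hf
end

section
/- Let Γ be a countable subgroup of the group of affine automorphisms of ℝⁿ. Let U ⊆ ℝⁿ be open and connected and let f : U → ℝⁿ be a smooth map such that f(x) ∈ Γ·x := {γ(x) : γ ∈ Γ} for every x ∈ U. Then there exists γ ∈ Γ such that f(x) = γ(x) for all x ∈ U. -/
open scoped Topology
open Set

/-- A function whose derivative vanishes at every point of an open preconnected set is
constant on that set. -/
lemma aux_const_of_fderiv_zero {E F : Type*} [NormedAddCommGroup E] [NormedSpace ℝ E]
    [NormedAddCommGroup F] [NormedSpace ℝ F] {U : Set E} (hU : IsOpen U)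
    (hconn : IsPreconnected U) {h : E → F} (hd : ∀ x ∈ U, HasFDerivAt h (0 : E →L[ℝ] F) x)
    {x₀ : E} (hx₀ : x₀ ∈ U) : ∀ x ∈ U, h x = h x₀ := by
  -- local constancy on balls
  have hloc : ∀ x ∈ U, ∃ ε > 0, Metric.ball x ε ⊆ U ∧ ∀ y ∈ Metric.ball x ε, h y = h x := by
    intro x hx
    obtain ⟨ε, hε, hball⟩ := Metric.isOpen_iff.1 hU x hx
    refine ⟨ε, hε, hball, fun y hy => ?_⟩
    refine (convex_ball x ε).is_const_of_fderivWithin_eq_zero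
      (fun z hz => ((hd z (hball hz)).differentiableAt).differentiableWithinAt)
      (fun z hz => ?_) hy (Metric.mem_ball_self hε)
    rw [fderivWithin_of_isOpen Metric.isOpen_ball hz, (hd z (hball hz)).fderiv]
  -- clopen argument
  set A : Set E := {x | x ∈ U ∧ h x = h x₀} with hA
  set B : Set E := {x | x ∈ U ∧ h x ≠ h x₀} with hB
  have hAopen : IsOpen A := by
    refine isOpen_iff_forall_mem_open.2 fun x hx => ?_
    obtain ⟨ε, hε, hsub, hconst⟩ := hloc x hx.1
    exact ⟨Metric.ball x ε, fun y hy => ⟨hsub hy, by rw [hconst y hy, hx.2]⟩,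
      Metric.isOpen_ball, Metric.mem_ball_self hε⟩
  have hBopen : IsOpen B := by
    refine isOpen_iff_forall_mem_open.2 fun x hx => ?_
    obtain ⟨ε, hε, hsub, hconst⟩ := hloc x hx.1
    exact ⟨Metric.ball x ε, fun y hy => ⟨hsub hy, by rw [hconst y hy]; exact hx.2⟩,
      Metric.isOpen_ball, Metric.mem_ball_self hε⟩
  intro x hx
  by_contra hne
  have hcover : U ⊆ A ∪ B := fun y hy => by
    by_cases hc : h y = h x₀
    · exact Or.inl ⟨hy, hc⟩
    · exact Or.inr ⟨hy, hc⟩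
  obtain ⟨z, hzU, hz⟩ := hconn A B hAopen hBopen hcover ⟨x₀, hx₀, hx₀, rfl⟩ ⟨x, hx, hx, hne⟩
  exact hz.2.2 hz.1.2

section Euclid

variable {n : ℕ}

local notation "E" => EuclideanSpace ℝ (Fin n)

/-- The linear part of an affine automorphism as a continuous linear map. -/
noncomputable def affCLM (γ : E ≃ᵃ[ℝ] E) : E →L[ℝ] E :=
  LinearMap.toContinuousLinearMap (γ.linear : E →ₗ[ℝ] E)

lemma aff_decomp (γ : E ≃ᵃ[ℝ] E) (z : E) : γ z = affCLM γ z + γ 0 := by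
  have := γ.toAffineMap.map_vadd 0 z
  simpa [affCLM, vadd_eq_add] using this

lemma aff_hasFDerivAt (γ : E ≃ᵃ[ℝ] E) (y : E) :
    HasFDerivAt (fun z => γ z) (affCLM γ) y := by
  have h : HasFDerivAt (fun z => affCLM γ z + γ 0) (affCLM γ) y :=
    (affCLM γ).hasFDerivAt.add_const _
  exact h.congr_of_eventuallyEq (Filter.Eventually.of_forall fun z => aff_decomp γ z)

/-- Baire category: if `f` takes values in the orbits of a countable family of affine maps
on an open set, then on every nonempty open subset there is a smaller nonempty open subset
on which `f` coincides with a single affine map from the family. -/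
lemma aux_baire (Γ : Subgroup (E ≃ᵃ[ℝ] E)) (hΓ : Countable Γ) {U V : Set E}
    (hV : IsOpen V) (hVU : V ⊆ U) (hne : V.Nonempty) {f : E → E}
    (hfc : ContinuousOn f U)
    (horb : ∀ x ∈ U, ∃ γ ∈ Γ, f x = γ x) :
    ∃ γ ∈ Γ, ∃ O : Set E, IsOpen O ∧ O.Nonempty ∧ O ⊆ V ∧ ∀ y ∈ O, f y = γ y := by
  obtain ⟨x, hx⟩ := hne
  obtain ⟨ε, hε, hball⟩ := Metric.isOpen_iff.1 hV x hx
  have hrpos : (0:ℝ) < ε / 2 := by linarith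
  have hBV : Metric.closedBall x (ε/2) ⊆ V :=
    (Metric.closedBall_subset_ball (by linarith)).trans hball
  have hBU : Metric.closedBall x (ε/2) ⊆ U := hBV.trans hVU
  haveI : CompleteSpace (Metric.closedBall x (ε/2)) :=
    (Metric.isClosed_closedBall).completeSpace_coe
  haveI : Nonempty (Metric.closedBall x (ε/2)) :=
    ⟨⟨x, Metric.mem_closedBall_self hrpos.le⟩⟩
  set S : Γ → Set (Metric.closedBall x (ε/2)) :=
    fun γ => {y | f ↑y = (γ : E ≃ᵃ[ℝ] E) ↑y} with hS
  have hSclosed : ∀ γ : Γ, IsClosed (S γ) := by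
    intro γ
    apply isClosed_eq
    · exact (hfc.mono hBU).restrict
    · exact ((γ : E ≃ᵃ[ℝ] E).continuous_of_finiteDimensional).comp continuous_subtype_val
  have hScover : (⋃ γ : Γ, S γ) = univ := by
    refine eq_univ_iff_forall.2 fun y => ?_
    obtain ⟨γ, hγ, hfy⟩ := horb ↑y (hBU y.2)
    exact mem_iUnion.2 ⟨⟨γ, hγ⟩, hfy⟩
  obtain ⟨γ, z, hz⟩ := nonempty_interior_of_iUnion_of_closed hSclosed hScover
  rw [mem_interior_iff_mem_nhds, nhds_subtype_eq_comap, Filter.mem_comap] at hz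
  obtain ⟨t, ht, hts⟩ := hz
  obtain ⟨O, hOt, hOopen, hzO⟩ := mem_nhds_iff.1 ht
  refine ⟨γ, γ.2, O ∩ Metric.ball x (ε/2), hOopen.inter Metric.isOpen_ball, ?_,
    (inter_subset_right).trans ((Metric.ball_subset_closedBall).trans hBV), ?_⟩
  · -- nonempty: z is in the closure of the open ball
    have hzcl : (z : E) ∈ closure (Metric.ball x (ε/2)) := by
      rw [closure_ball x (ne_of_gt hrpos)]; exact z.2
    exact _root_.mem_closure_iff.1 hzcl O hOopen hzO
  · intro y hy
    have hyB : y ∈ Metric.closedBall x (ε/2) := Metric.ball_subset_closedBall hy.2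
    exact hts (show (⟨y, hyB⟩ : Metric.closedBall x (ε/2)) ∈ Subtype.val ⁻¹' t from hOt hy.1)

end Euclid

/-- A smooth map on a connected open set `U ⊆ ℝⁿ` whose values lie pointwise in
the orbits of a countable group `Γ` of affine automorphisms of `ℝⁿ` coincides on all of `U`
with a single element `γ ∈ Γ`. -/
theorem countable_affine_orbit_rigidity
    {n : ℕ}
    (Γ : Subgroup (EuclideanSpace ℝ (Fin n) ≃ᵃ[ℝ] EuclideanSpace ℝ (Fin n)))
    (hΓ : Countable Γ)
    (U : Set (EuclideanSpace ℝ (Fin n))) (hU : IsOpen U) (hUconn : IsConnected U)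
    (f : EuclideanSpace ℝ (Fin n) → EuclideanSpace ℝ (Fin n))
    (hf : ContDiffOn ℝ (⊤ : ℕ∞) f U)
    (horb : ∀ x ∈ U, ∃ γ ∈ Γ, f x = γ x) :
    ∃ γ ∈ Γ, ∀ x ∈ U, f x = γ x := by
  classical
  have hf2 : ContDiffOn ℝ 2 f U := hf.of_le (by exact WithTop.coe_le_coe.mpr (le_top : (2 : ℕ∞) ≤ ⊤) : (2 : WithTop ℕ∞) ≤ ((⊤ : ℕ∞) : WithTop ℕ∞))
  have hfc : ContinuousOn f U := hf2.continuousOn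
  -- first derivative
  set g : EuclideanSpace ℝ (Fin n) → (EuclideanSpace ℝ (Fin n) →L[ℝ] EuclideanSpace ℝ (Fin n)) := fun y => fderiv ℝ f y with hgdef
  have hg1 : ContDiffOn ℝ 1 g U := hf2.fderiv_of_isOpen hU (by norm_num)
  have hgc : ContinuousOn g U := hg1.continuousOn
  have hgdiff : ∀ x ∈ U, DifferentiableAt ℝ g x := fun x hx =>
    ((hg1.differentiableOn (by norm_num)) x hx).differentiableAt (hU.mem_nhds hx)
  -- second derivative, continuous on U
  set φ : EuclideanSpace ℝ (Fin n) → (EuclideanSpace ℝ (Fin n) →L[ℝ] (EuclideanSpace ℝ (Fin n) →L[ℝ] EuclideanSpace ℝ (Fin n))) := fun x => fderiv ℝ g x with hφdef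
  have hφc : ContinuousOn φ U := hg1.continuousOn_fderiv_of_isOpen hU (by norm_num)
  -- the set where f is locally affine
  set W : Set (EuclideanSpace ℝ (Fin n)) := {x | x ∈ U ∧ ∃ γ : Γ, ∀ᶠ y in 𝓝 x, f y = (γ : EuclideanSpace ℝ (Fin n) ≃ᵃ[ℝ] EuclideanSpace ℝ (Fin n)) y} with hW
  -- W is dense in U
  have hWdense : ∀ x ∈ U, x ∈ closure W := by
    intro x hx
    rw [Metric.mem_closure_iff]
    intro ε hε
    have hVopen : IsOpen (U ∩ Metric.ball x ε) := hU.inter Metric.isOpen_ball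
    have hVne : (U ∩ Metric.ball x ε).Nonempty := ⟨x, hx, Metric.mem_ball_self hε⟩
    obtain ⟨γ, hγ, O, hOopen, ⟨w, hw⟩, hOV, hfeq⟩ :=
      aux_baire Γ hΓ hVopen inter_subset_left hVne hfc horb
    refine ⟨w, ⟨(hOV hw).1, ⟨⟨γ, hγ⟩, ?_⟩⟩, ?_⟩
    · exact Filter.eventually_of_mem (hOopen.mem_nhds hw) hfeq
    · have := (hOV hw).2
      rw [Metric.mem_ball] at this
      rw [dist_comm]; exact this
  -- on W, the second derivative vanishes
  have hφW : ∀ x ∈ W, φ x = 0 := by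
    rintro x ⟨hxU, γ, hγ⟩
    have hgconst : g =ᶠ[𝓝 x] fun _ => affCLM (γ : EuclideanSpace ℝ (Fin n) ≃ᵃ[ℝ] EuclideanSpace ℝ (Fin n)) := by
      filter_upwards [hγ.eventually_nhds] with y hy
      have : fderiv ℝ f y = fderiv ℝ (fun z => (γ : EuclideanSpace ℝ (Fin n) ≃ᵃ[ℝ] EuclideanSpace ℝ (Fin n)) z) y :=
        Filter.EventuallyEq.fderiv_eq hy
      rw [hgdef]
      simp only []
      rw [this, (aff_hasFDerivAt (γ : EuclideanSpace ℝ (Fin n) ≃ᵃ[ℝ] EuclideanSpace ℝ (Fin n)) y).fderiv]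
    calc φ x = fderiv ℝ (fun _ : EuclideanSpace ℝ (Fin n) => affCLM (γ : EuclideanSpace ℝ (Fin n) ≃ᵃ[ℝ] EuclideanSpace ℝ (Fin n))) x :=
          Filter.EventuallyEq.fderiv_eq hgconst
      _ = 0 := fderiv_const_apply _
  -- hence by continuity and density, the second derivative vanishes on U
  have hφU : ∀ x ∈ U, φ x = 0 := by
    intro x hx
    have hxcl : x ∈ closure W := hWdense x hx
    have hNB : (𝓝[W] x).NeBot := mem_closure_iff_nhdsWithin_neBot.1 hxcl
    have h1 : Filter.Tendsto φ (𝓝[W] x) (𝓝 (φ x)) :=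
      ((hφc.continuousAt (hU.mem_nhds hx)).continuousWithinAt).tendsto
    have h2 : Filter.Tendsto φ (𝓝[W] x) (𝓝 0) := by
      refine Filter.Tendsto.congr' ?_ tendsto_const_nhds
      exact (eventually_nhdsWithin_of_forall fun y hy => (hφW y hy).symm)
    exact tendsto_nhds_unique h1 h2
  -- so g has zero derivative on U, hence is constant on U
  have hgderiv : ∀ x ∈ U, HasFDerivAt g (0 : EuclideanSpace ℝ (Fin n) →L[ℝ] (EuclideanSpace ℝ (Fin n) →L[ℝ] EuclideanSpace ℝ (Fin n))) x := by
    intro x hx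
    have := (hgdiff x hx).hasFDerivAt
    rwa [show fderiv ℝ g x = 0 from hφU x hx] at this
  -- find a base open set where f coincides with some γ₀
  obtain ⟨γ₀, hγ₀, O, hOopen, ⟨x₀, hx₀⟩, hOU, hfeq⟩ :=
    aux_baire Γ hΓ hU (le_refl U) hUconn.nonempty hfc horb
  have hx₀U : x₀ ∈ U := hOU hx₀
  -- g is constant on U, equal to the linear part of γ₀
  have hgO : ∀ y ∈ O, g y = affCLM γ₀ := by
    intro y hy
    have hev : f =ᶠ[𝓝 y] fun z => γ₀ z :=
      Filter.eventually_of_mem (hOopen.mem_nhds hy) hfeq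
    rw [hgdef]
    simp only []
    rw [Filter.EventuallyEq.fderiv_eq hev, (aff_hasFDerivAt γ₀ y).fderiv]
  have hgconst : ∀ x ∈ U, g x = affCLM γ₀ := by
    intro x hx
    rw [aux_const_of_fderiv_zero hU hUconn.isPreconnected hgderiv hx₀U x hx, hgO x₀ hx₀]
  -- now f - affCLM γ₀ has zero derivative on U, hence is constant
  set F : EuclideanSpace ℝ (Fin n) → EuclideanSpace ℝ (Fin n) := fun y => f y - affCLM γ₀ y with hF
  have hFderiv : ∀ x ∈ U, HasFDerivAt F (0 : EuclideanSpace ℝ (Fin n) →L[ℝ] EuclideanSpace ℝ (Fin n)) x := by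
    intro x hx
    have hfd : DifferentiableAt ℝ f x :=
      (hf2.differentiableOn (by norm_num) x hx).differentiableAt (hU.mem_nhds hx)
    have h1 : HasFDerivAt f (g x) x := hfd.hasFDerivAt
    have h2 : HasFDerivAt (fun y => affCLM γ₀ y) (affCLM γ₀) x := (affCLM γ₀).hasFDerivAt
    have := h1.sub h2
    rwa [hgconst x hx, sub_self] at this
  have hFconst : ∀ x ∈ U, F x = F x₀ :=
    aux_const_of_fderiv_zero hU hUconn.isPreconnected hFderiv hx₀U
  refine ⟨γ₀, hγ₀, fun x hx => ?_⟩
  have h1 : f x - affCLM γ₀ x = f x₀ - affCLM γ₀ x₀ := hFconst x hx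
  have h2 : f x₀ = γ₀ x₀ := hfeq x₀ hx₀
  have h3 : (γ₀ : EuclideanSpace ℝ (Fin n) ≃ᵃ[ℝ] EuclideanSpace ℝ (Fin n)) x₀ = affCLM γ₀ x₀ + γ₀ 0 := aff_decomp γ₀ x₀
  have h4 : (γ₀ : EuclideanSpace ℝ (Fin n) ≃ᵃ[ℝ] EuclideanSpace ℝ (Fin n)) x = affCLM γ₀ x + γ₀ 0 := aff_decomp γ₀ x
  have : f x = affCLM γ₀ x + (f x₀ - affCLM γ₀ x₀) := by
    have := h1; abel_nf at this ⊢; linear_combination (norm := abel) this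
  rw [this, h2, h3, h4]; abel
end

section
/- Let U ⊆ ℝⁿ be open and let f : U → ℝⁿ be a smooth map. Suppose there is a countable family (ψ_k)_{k∈ℕ} of isometries of Euclidean space ℝⁿ such that for every x ∈ U there exists k with f(x) = ψ_k(x). Then for every x ∈ U the derivative Df(x) is a linear isometry of ℝⁿ (i.e. ‖Df(x)v‖ = ‖v‖ for all v ∈ ℝⁿ). -/
open scoped Topology
open Set

/-- If a smooth map `f : U → ℝⁿ` on an open set `U ⊆ ℝⁿ` agrees at every point
with one of countably many isometries of `ℝⁿ`, then its derivative at every point of `U`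
is a linear isometry. -/
theorem deriv_isometry_of_countable_isometry_values
    {n : ℕ} (U : Set (EuclideanSpace ℝ (Fin n))) (hU : IsOpen U)
    (f : EuclideanSpace ℝ (Fin n) → EuclideanSpace ℝ (Fin n))
    (hf : ContDiffOn ℝ (⊤ : ℕ∞) f U)
    (ψ : ℕ → (EuclideanSpace ℝ (Fin n) ≃ᵢ EuclideanSpace ℝ (Fin n)))
    (hψ : ∀ x ∈ U, ∃ k : ℕ, f x = ψ k x) :
    ∀ x ∈ U, ∀ v : EuclideanSpace ℝ (Fin n), ‖fderivWithin ℝ f U x v‖ = ‖v‖ := by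
  set C : ℕ → Set (EuclideanSpace ℝ (Fin n)) :=
    fun k => closure {x | x ∈ U ∧ f x = ψ k x} with hC
  have hfc : ContinuousOn f U := hf.continuousOn
  have key : ∀ k, ∀ y ∈ interior (C k) ∩ U, ∀ v : EuclideanSpace ℝ (Fin n),
      ‖fderivWithin ℝ f U y v‖ = ‖v‖ := by
    intro k y hy v
    set W := interior (C k) ∩ U with hW
    have hWopen : IsOpen W := isOpen_interior.inter hU
    -- f = ψ k on W
    have hEq : EqOn f (ψ k) W := by
      intro z hz
      have hden : z ∈ closure ({x | x ∈ U ∧ f x = ψ k x} ∩ W) := by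
        have h1 : z ∈ closure {x | x ∈ U ∧ f x = ψ k x} :=
          interior_subset hz.1
        have := hWopen.inter_closure (s := W) ⟨hz, h1⟩
        rwa [inter_comm] at this
      have hne : (𝓝[({x | x ∈ U ∧ f x = ψ k x} ∩ W)] z).NeBot :=
        mem_closure_iff_nhdsWithin_neBot.mp hden
      have hcf : Filter.Tendsto f (𝓝[({x | x ∈ U ∧ f x = ψ k x} ∩ W)] z) (𝓝 (f z)) := by
        have : ContinuousAt f z := hfc.continuousAt (hU.mem_nhds hz.2)
        exact this.continuousWithinAt.tendsto
      have hcg : Filter.Tendsto (ψ k) (𝓝[({x | x ∈ U ∧ f x = ψ k x} ∩ W)] z) (𝓝 (ψ k z)) :=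
        ((ψ k).continuous.continuousAt).continuousWithinAt.tendsto
      have : Filter.Tendsto f (𝓝[({x | x ∈ U ∧ f x = ψ k x} ∩ W)] z) (𝓝 (ψ k z)) := by
        refine hcg.congr' ?_
        filter_upwards [self_mem_nhdsWithin] with a ha
        exact ha.1.2.symm
      exact tendsto_nhds_unique hcf this
    have h1 : fderivWithin ℝ f U y = fderiv ℝ f y := fderivWithin_of_isOpen hU hy.2
    set L := (ψ k).toRealLinearIsometryEquiv with hL
    have hψform : ∀ x : EuclideanSpace ℝ (Fin n), ψ k x = L x + ψ k 0 := by
      intro x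
      rw [hL, IsometryEquiv.toRealLinearIsometryEquiv_apply]
      abel
    have hder : HasFDerivAt (ψ k)
        (L.toContinuousLinearEquiv : EuclideanSpace ℝ (Fin n) →L[ℝ] EuclideanSpace ℝ (Fin n)) y := by
      have : HasFDerivAt (fun x => L x + ψ k 0)
          (L.toContinuousLinearEquiv : EuclideanSpace ℝ (Fin n) →L[ℝ] EuclideanSpace ℝ (Fin n)) y :=
        (L.toContinuousLinearEquiv.hasFDerivAt).add_const _
      exact this.congr_of_eventuallyEq (by filter_upwards with x using (hψform x))
    have h2 : fderiv ℝ f y =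
        (L.toContinuousLinearEquiv : EuclideanSpace ℝ (Fin n) →L[ℝ] EuclideanSpace ℝ (Fin n)) := by
      have hevt : f =ᶠ[𝓝 y] (ψ k) :=
        Filter.eventuallyEq_of_mem (hWopen.mem_nhds hy) hEq
      rw [Filter.EventuallyEq.fderiv_eq hevt, hder.fderiv]
    rw [h1, h2]
    simpa using L.norm_map v
  intro x hx v
  have hcover : (⋃ i : Option ℕ, (Option.elim i Uᶜ C)) = univ := by
    apply eq_univ_of_forall
    intro z
    by_cases hz : z ∈ U
    · obtain ⟨k, hk⟩ := hψ z hz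
      exact mem_iUnion.2 ⟨some k, subset_closure ⟨hz, hk⟩⟩
    · exact mem_iUnion.2 ⟨none, hz⟩
  have hclosed : ∀ i : Option ℕ, IsClosed (Option.elim i Uᶜ C) := by
    rintro (_ | k)
    · exact hU.isClosed_compl
    · exact isClosed_closure
  have hdense : Dense (⋃ i : Option ℕ, interior (Option.elim i Uᶜ C)) :=
    dense_iUnion_interior_of_closed hclosed hcover
  set G : Set (EuclideanSpace ℝ (Fin n)) := (⋃ k, interior (C k)) ∩ U with hG
  have hxG : x ∈ closure G := by
    have h1 : x ∈ closure (U ∩ ⋃ i : Option ℕ, interior (Option.elim i Uᶜ C)) :=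
      hU.inter_closure ⟨hx, hdense x⟩
    refine closure_mono ?_ h1
    rintro z ⟨hzU, hz⟩
    obtain ⟨i, hi⟩ := mem_iUnion.mp hz
    match i with
    | none => exact absurd (interior_subset hi) (by simpa using hzU)
    | some k => exact ⟨mem_iUnion.2 ⟨k, hi⟩, hzU⟩
  have hdercont : ContinuousOn (fun y => fderivWithin ℝ f U y) U :=
    hf.continuousOn_fderivWithin hU.uniqueDiffOn (by simp)
  have hgc : ContinuousOn (fun y => ‖fderivWithin ℝ f U y v‖) U :=
    (hdercont.clm_apply continuousOn_const).norm
  have hGsub : G ⊆ U := inter_subset_right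
  have hne : (𝓝[G] x).NeBot := mem_closure_iff_nhdsWithin_neBot.mp hxG
  have ht1 : Filter.Tendsto (fun y => ‖fderivWithin ℝ f U y v‖) (𝓝[G] x)
      (𝓝 (‖fderivWithin ℝ f U x v‖)) :=
    ((hgc x hx).mono hGsub).tendsto
  have ht2 : Filter.Tendsto (fun y => ‖fderivWithin ℝ f U y v‖) (𝓝[G] x) (𝓝 ‖v‖) := by
    refine tendsto_const_nhds.congr' ?_
    filter_upwards [self_mem_nhdsWithin] with a ha
    obtain ⟨hai, haU⟩ := ha
    obtain ⟨k, hk⟩ := mem_iUnion.mp hai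
    exact (key k a ⟨hk, haU⟩ v).symm
  exact tendsto_nhds_unique ht1 ht2
end

section
/- Let Γ be a countable subgroup of the group of affine automorphisms of ℝᵐ, let M be a smooth manifold, and let X, Y : M → ℝᵐ be smooth maps such that X is a submersion and Y(x) ∈ Γ·X(x) := {γ(X(x)) : γ ∈ Γ} for every x ∈ M. Then there exists a locally constant map α : M → Γ such that Y(x) = α(x)(X(x)) for all x ∈ M. -/
/-!
In a chart, let `σ` be a smooth right inverse of the differential of the submersion `X`. The
1-jets of `X` and `Y` give the candidate affine map `(DY ∘ σ, Y - (DY ∘ σ) X)`, which equals `γ`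
wherever `Y = γ ∘ X` locally. By Baire such points are dense, so this `C¹` candidate is locally
constant on a dense set, hence constant near every point, and `Y` is locally of the form `γ ∘ X`.
As `X` is a submersion, `γ` is determined by the germ of `Y`, so the local choices glue to a
locally constant map.
-/

open scoped Manifold Topology
open Set Filter Function

theorem dense_setOf_exists_eventuallyEq {X Y ι : Type*} [TopologicalSpace X] [BaireSpace X]
    [TopologicalSpace Y] [T2Space Y] [Countable ι] {f : ι → X → Y} {g : X → Y}
    (hf : ∀ i, Continuous (f i)) (hg : Continuous g) (hcover : ∀ x, ∃ i, g x = f i x) :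
    Dense {x | ∃ i, g =ᶠ[𝓝 x] f i} := by
  have hunion : ⋃ i, {x | g x = f i x} = univ :=
    eq_univ_of_forall fun x => mem_iUnion.2 (hcover x)
  refine (dense_iUnion_interior_of_closed (fun i => isClosed_eq hg (hf i)) hunion).mono ?_
  intro x hx
  obtain ⟨i, hi⟩ := mem_iUnion.1 hx
  exact ⟨i, mem_interior_iff_mem_nhds.1 hi⟩

theorem exists_isLocallyConstant_of_eventually_unique {X ι : Type*} [TopologicalSpace X]
    {p : X → ι → Prop} (hex : ∀ x, ∃ i, ∀ᶠ y in 𝓝 x, p y i)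
    (huniq : ∀ x i j, (∀ᶠ y in 𝓝 x, p y i) → (∀ᶠ y in 𝓝 x, p y j) → i = j) :
    ∃ α : X → ι, IsLocallyConstant α ∧ ∀ x, p x (α x) := by
  choose α hα using hex
  refine ⟨α, (IsLocallyConstant.iff_eventually_eq α).2 fun x => ?_, fun x => (hα x).self_of_nhds⟩
  filter_upwards [(hα x).eventually_nhds] with y hy
  exact huniq y _ _ (hα y) hy

section NormedSpace

variable {E V W : Type*} [NormedAddCommGroup E] [NormedSpace ℝ E] [NormedAddCommGroup V]
  [NormedSpace ℝ V] [NormedAddCommGroup W] [NormedSpace ℝ W]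

theorem eventuallyEq_const_of_eventually_fderiv_eq_zero {f : E → W} {w₀ : E}
    (hf : ∀ᶠ w in 𝓝 w₀, DifferentiableAt ℝ f w ∧ fderiv ℝ f w = 0) :
    f =ᶠ[𝓝 w₀] fun _ => f w₀ := by
  obtain ⟨ε, hε, hball⟩ := Metric.eventually_nhds_iff_ball.1 hf
  filter_upwards [Metric.ball_mem_nhds w₀ hε] with w hw
  exact Metric.isOpen_ball.is_const_of_fderiv_eq_zero (convex_ball w₀ ε).isPreconnected
    (fun y hy => (hball y hy).1.differentiableWithinAt) (fun y hy => (hball y hy).2) hw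
    (Metric.mem_ball_self hε)

/-- The derivative vanishes where `f` is locally constant, hence by continuity near `w₀`. -/
theorem ContDiffAt.eventuallyEq_const_of_frequently_eventuallyEq_const {f : E → W} {w₀ : E}
    (hf : ContDiffAt ℝ 1 f w₀)
    (hconst : ∀ᶠ w in 𝓝 w₀, ∃ᶠ w' in 𝓝 w, f =ᶠ[𝓝 w'] fun _ => f w') :
    f =ᶠ[𝓝 w₀] fun _ => f w₀ := by
  refine eventuallyEq_const_of_eventually_fderiv_eq_zero ?_
  filter_upwards [hf.eventually (by simp), hconst] with w hw hfreq
  refine ⟨hw.differentiableAt one_ne_zero, ?_⟩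
  have hcont : ContinuousAt (fderiv ℝ f) w := (hw.fderiv_right (m := 0) le_rfl).continuousAt
  exact tendsto_nhds_unique_of_frequently_eq hcont tendsto_const_nhds
    (hfreq.mono fun w' hw' => by rw [hw'.fderiv_eq, fderiv_const_apply])

/-- If `σ w` is a right inverse of `fderiv ℝ F w` and `G = T ∘ F` near `w` for an affine map `T`,
this is the pair (linear part of `T`, `T 0`). -/
noncomputable def affineFactor (F : E → V) (G : E → W) (σ : E → V →L[ℝ] E) (w : E) :
    (V →L[ℝ] W) × W :=
  ((fderiv ℝ G w).comp (σ w), G w - (fderiv ℝ G w).comp (σ w) (F w))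

theorem contDiffAt_affineFactor {n : WithTop ℕ∞} {F : E → V} {G : E → W} {σ : E → V →L[ℝ] E}
    {w : E} (hF : ContDiffAt ℝ (n + 1) F w) (hG : ContDiffAt ℝ (n + 1) G w)
    (hσ : ContDiffAt ℝ n σ w) : ContDiffAt ℝ n (affineFactor F G σ) w := by
  have hlin := hG.fderiv_right_succ.clm_comp hσ
  exact hlin.prodMk ((hG.of_le le_self_add).sub (hlin.clm_apply (hF.of_le le_self_add)))

variable [FiniteDimensional ℝ V]

theorem AffineMap.hasFDerivAt_of_finiteDimensional (T : V →ᵃ[ℝ] W) (v : V) :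
    HasFDerivAt T (LinearMap.toContinuousLinearMap T.linear) v := by
  rw [T.decomp]
  exact (LinearMap.toContinuousLinearMap T.linear).hasFDerivAt.add_const (T 0)

theorem fderiv_eq_comp_of_eventuallyEq_affineMap_comp {T : V →ᵃ[ℝ] W} {F : E → V} {G : E → W}
    {w : E} (hG : G =ᶠ[𝓝 w] T ∘ F) (hF : DifferentiableAt ℝ F w) :
    fderiv ℝ G w = (LinearMap.toContinuousLinearMap T.linear).comp (fderiv ℝ F w) := by
  rw [hG.fderiv_eq]
  exact ((T.hasFDerivAt_of_finiteDimensional (F w)).comp w hF.hasFDerivAt).fderiv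

theorem ContDiffAt.exists_rightInverse_fderiv {n : WithTop ℕ∞} {F : E → V} {w₀ : E}
    (hF : ContDiffAt ℝ (n + 1) F w₀) (hsurj : Surjective (fderiv ℝ F w₀)) :
    ∃ σ : E → V →L[ℝ] E, ContDiffAt ℝ n σ w₀ ∧
      ∀ᶠ w in 𝓝 w₀, (fderiv ℝ F w).comp (σ w) = ContinuousLinearMap.id ℝ V := by
  obtain ⟨ψ, hψ⟩ := LinearMap.exists_rightInverse_of_surjective (fderiv ℝ F w₀ : E →ₗ[ℝ] V)
    (LinearMap.range_eq_top.2 hsurj)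
  set σ₀ := LinearMap.toContinuousLinearMap ψ
  -- `σ w = σ₀ ∘ (DF(w) ∘ σ₀)⁻¹`, where `DF(w) ∘ σ₀` is `1` at `w₀`, hence invertible nearby.
  set R : E → V →L[ℝ] V := fun w => (fderiv ℝ F w).comp σ₀
  have hR : ContDiffAt ℝ n R w₀ := hF.fderiv_right_succ.clm_comp contDiffAt_const
  have hR₀ : IsUnit (R w₀) := by
    convert isUnit_one (M := V →L[ℝ] V)
    exact ContinuousLinearMap.ext fun v => LinearMap.congr_fun hψ v
  have hinv : ContDiffAt ℝ n (fun w => Ring.inverse (R w)) w₀ :=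
    (hR₀.unit_spec ▸ contDiffAt_ringInverse ℝ hR₀.unit).comp w₀ hR
  refine ⟨fun w => σ₀.comp (Ring.inverse (R w)), contDiffAt_const.clm_comp hinv, ?_⟩
  filter_upwards [hR.continuousAt.eventually (Units.isOpen.mem_nhds hR₀)] with w hw
  rw [← ContinuousLinearMap.comp_assoc]
  exact Ring.mul_inverse_cancel _ hw

theorem affineFactor_eventuallyEq_of_eventuallyEq_comp {T : V →ᵃ[ℝ] W} {F : E → V} {G : E → W}
    {σ : E → V →L[ℝ] E} {w : E} (hG : G =ᶠ[𝓝 w] T ∘ F)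
    (hσ : ∀ᶠ w' in 𝓝 w,
      DifferentiableAt ℝ F w' ∧ (fderiv ℝ F w').comp (σ w') = ContinuousLinearMap.id ℝ V) :
    affineFactor F G σ =ᶠ[𝓝 w] fun _ => (LinearMap.toContinuousLinearMap T.linear, T 0) := by
  filter_upwards [hG.eventually_nhds, hσ] with w' hG' ⟨hF', hσ'⟩
  have hlin : (fderiv ℝ G w').comp (σ w') = LinearMap.toContinuousLinearMap T.linear := by
    rw [fderiv_eq_comp_of_eventuallyEq_affineMap_comp hG' hF', ContinuousLinearMap.comp_assoc, hσ',
      ContinuousLinearMap.comp_id]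
  rw [affineFactor, hlin, hG'.self_of_nhds, comp_apply, T.decomp]
  simp

theorem exists_eventuallyEq_affineMap_comp {ι : Type*} (T : ι → V →ᵃ[ℝ] W) {F : E → V}
    {G : E → W} {w₀ : E} (hF : ContDiffAt ℝ 2 F w₀) (hG : ContDiffAt ℝ 2 G w₀)
    (hsurj : Surjective (fderiv ℝ F w₀))
    (hdense : ∀ᶠ w in 𝓝 w₀, ∃ᶠ w' in 𝓝 w, ∃ i, G =ᶠ[𝓝 w'] T i ∘ F) :
    ∃ i, G =ᶠ[𝓝 w₀] T i ∘ F := by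
  obtain ⟨σ, hσ, hσF⟩ := hF.exists_rightInverse_fderiv (n := 1) hsurj
  set Φ := affineFactor F G σ
  have hloc : ∀ᶠ w in 𝓝 w₀, ∀ i, G =ᶠ[𝓝 w] T i ∘ F →
      Φ =ᶠ[𝓝 w] fun _ => (LinearMap.toContinuousLinearMap (T i).linear, T i 0) := by
    have hFd : ∀ᶠ w in 𝓝 w₀, DifferentiableAt ℝ F w :=
      (hF.eventually (by simp)).mono fun w hw => hw.differentiableAt two_ne_zero
    exact ((hFd.and hσF).eventually_nhds).mono fun w hw i hi =>
      affineFactor_eventuallyEq_of_eventuallyEq_comp hi hw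
  have hconst : Φ =ᶠ[𝓝 w₀] fun _ => Φ w₀ := by
    refine (contDiffAt_affineFactor hF hG hσ).eventuallyEq_const_of_frequently_eventuallyEq_const ?_
    filter_upwards [hdense, hloc.eventually_nhds] with w hfreq hloc'
    exact (hfreq.and_eventually hloc').mono fun w' ⟨⟨i, hi⟩, hw'⟩ =>
      (hw' i hi).mono fun _ h => h.trans (hw' i hi).self_of_nhds.symm
  obtain ⟨w₁, ⟨i, hi⟩, hΦ₁, hloc₁⟩ := (hdense.self_of_nhds.and_eventually (hconst.and hloc)).exists
  have hΦ₀ : Φ w₀ = (LinearMap.toContinuousLinearMap (T i).linear, T i 0) :=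
    hΦ₁.symm.trans (hloc₁ i hi).self_of_nhds
  refine ⟨i, ?_⟩
  filter_upwards [hconst] with w hw
  calc G w = (Φ w).1 (F w) + (Φ w).2 := (add_sub_cancel _ _).symm
    _ = T i (F w) := by rw [hw, hΦ₀, (T i).decomp]; simp

end NormedSpace

section Manifold

variable {𝕜 E E' M : Type*} [NontriviallyNormedField 𝕜] [NormedAddCommGroup E] [NormedSpace 𝕜 E]
  [NormedAddCommGroup E'] [NormedSpace 𝕜 E'] [TopologicalSpace M] [ChartedSpace E M]
  {f : M → E'} {x : M}

theorem ContMDiffAt.contDiffAt_comp_chartAt_symm {n : WithTop ℕ∞}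
    (hf : ContMDiffAt 𝓘(𝕜, E) 𝓘(𝕜, E') n f x) :
    ContDiffAt 𝕜 n (f ∘ (chartAt E x).symm) (chartAt E x x) := by
  rw [contMDiffAt_iff] at hf
  simpa [writtenInExtChartAt, extChartAt, chartAt_self_eq, contDiffWithinAt_univ] using hf.2

theorem MDifferentiableAt.mfderiv_eq_fderiv_comp_chartAt_symm
    (hf : MDifferentiableAt 𝓘(𝕜, E) 𝓘(𝕜, E') f x) :
    mfderiv 𝓘(𝕜, E) 𝓘(𝕜, E') f x = fderiv 𝕜 (f ∘ (chartAt E x).symm) (chartAt E x x) := by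
  simpa [writtenInExtChartAt, extChartAt, chartAt_self_eq] using hf.mfderiv

end Manifold

section AffineGerms

variable {E M V W : Type*} [NormedAddCommGroup E] [NormedSpace ℝ E] [TopologicalSpace M]
  [NormedAddCommGroup V] [NormedSpace ℝ V] [FiniteDimensional ℝ V] [NormedAddCommGroup W]
  [NormedSpace ℝ W]

theorem AffineMap.eq_of_eventuallyEq_comp {H : Type*} [TopologicalSpace H] [ChartedSpace H M]
    {I : ModelWithCorners ℝ E H} {T T' : V →ᵃ[ℝ] W} {X : M → V} {x : M}
    (hX : MDifferentiableAt I 𝓘(ℝ, V) X x)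
    (hsurj : Surjective (mfderiv I 𝓘(ℝ, V) X x)) (h : T ∘ X =ᶠ[𝓝 x] T' ∘ X) : T = T' := by
  have hmfderiv : ∀ T : V →ᵃ[ℝ] W, mfderiv I 𝓘(ℝ, W) (T ∘ X) x =
      (LinearMap.toContinuousLinearMap T.linear).comp (mfderiv I 𝓘(ℝ, V) X x) := fun T => by
    have hT := T.hasFDerivAt_of_finiteDimensional (X x)
    rw [mfderiv_comp x hT.differentiableAt.mdifferentiableAt hX, mfderiv_eq_fderiv, hT.fderiv]
    rfl
  have hderiv := h.mfderiv_eq (I := I) (I' := 𝓘(ℝ, W))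
  rw [hmfderiv, hmfderiv] at hderiv
  refine AffineMap.ext_linear (LinearMap.ext fun v => ?_) h.self_of_nhds
  obtain ⟨u, rfl⟩ := hsurj v
  exact DFunLike.congr_fun hderiv u

theorem ContMDiffAt.exists_eventuallyEq_affineMap_comp [ChartedSpace E M] {ι : Type*}
    (T : ι → V →ᵃ[ℝ] W) {X : M → V} {Y : M → W} {x₀ : M}
    (hX : ContMDiffAt 𝓘(ℝ, E) 𝓘(ℝ, V) 2 X x₀) (hY : ContMDiffAt 𝓘(ℝ, E) 𝓘(ℝ, W) 2 Y x₀)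
    (hsurj : Surjective (mfderiv 𝓘(ℝ, E) 𝓘(ℝ, V) X x₀))
    (hdense : ∀ᶠ x in 𝓝 x₀, ∃ᶠ x' in 𝓝 x, ∃ i, Y =ᶠ[𝓝 x'] T i ∘ X) :
    ∃ i, Y =ᶠ[𝓝 x₀] T i ∘ X := by
  set φ := chartAt E x₀
  have hx₀ : x₀ ∈ φ.source := mem_chart_source E x₀
  have hgerm : ∀ {x} (hx : x ∈ φ.source) (i : ι),
      Y ∘ φ.symm =ᶠ[𝓝 (φ x)] T i ∘ (X ∘ φ.symm) ↔ Y =ᶠ[𝓝 x] T i ∘ X :=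
    fun hx i => φ.eventually_nhds' (fun y => Y y = T i (X y)) hx
  have hdense' : ∀ᶠ w in 𝓝 (φ x₀), ∃ᶠ w' in 𝓝 w, ∃ i,
      Y ∘ φ.symm =ᶠ[𝓝 w'] T i ∘ (X ∘ φ.symm) := by
    rw [φ.eventually_nhds _ hx₀]
    filter_upwards [hdense, φ.open_source.mem_nhds hx₀] with x hfreq hx
    rw [← φ.map_nhds_eq hx, frequently_map]
    exact (hfreq.and_eventually (φ.open_source.mem_nhds hx)).mono
      fun x' ⟨⟨i, hi⟩, hx'⟩ => ⟨i, (hgerm hx' i).2 hi⟩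
  have hsurj' : Surjective (fderiv ℝ (X ∘ φ.symm) (φ x₀)) := by
    rwa [← (hX.mdifferentiableAt two_ne_zero).mfderiv_eq_fderiv_comp_chartAt_symm]
  obtain ⟨i, hi⟩ := _root_.exists_eventuallyEq_affineMap_comp T hX.contDiffAt_comp_chartAt_symm
    hY.contDiffAt_comp_chartAt_symm hsurj' hdense'
  exact ⟨i, (hgerm hx₀ i).1 hi⟩

end AffineGerms

theorem locally_constant_affine_cocycle_general
    {d m : ℕ}
    {M : Type*} [TopologicalSpace M] [ChartedSpace (EuclideanSpace ℝ (Fin d)) M]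
    [T2Space M]
    (Γ : Subgroup (EuclideanSpace ℝ (Fin m) ≃ᵃ[ℝ] EuclideanSpace ℝ (Fin m)))
    (hΓ : Countable Γ)
    (X Y : M → EuclideanSpace ℝ (Fin m))
    (hX : ContMDiff (𝓡 d) (𝓡 m) (⊤ : ℕ∞) X) (hY : ContMDiff (𝓡 d) (𝓡 m) (⊤ : ℕ∞) Y)
    (hsub : ∀ x : M, Function.Surjective (mfderiv (𝓡 d) (𝓡 m) X x))
    (horb : ∀ x : M, ∃ γ ∈ Γ, Y x = γ (X x)) :
    ∃ α : M → Γ, IsLocallyConstant α ∧ ∀ x : M, Y x = (α x).val (X x) := by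
  have : LocallyCompactSpace M := ChartedSpace.locallyCompactSpace (EuclideanSpace ℝ (Fin d)) M
  set T : Γ → EuclideanSpace ℝ (Fin m) →ᵃ[ℝ] EuclideanSpace ℝ (Fin m) := fun γ => γ.val.toAffineMap
  have hdense : Dense {x | ∃ γ, Y =ᶠ[𝓝 x] T γ ∘ X} :=
    dense_setOf_exists_eventuallyEq
      (fun γ => (T γ).continuous_of_finiteDimensional.comp hX.continuous) hY.continuous
      fun x => by obtain ⟨γ, hγ, h⟩ := horb x; exact ⟨⟨γ, hγ⟩, h⟩
  have h2 : (2 : WithTop ℕ∞) ≤ (⊤ : ℕ∞) := WithTop.coe_le_coe.2 le_top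
  have hlocal : ∀ x₀, ∃ γ, Y =ᶠ[𝓝 x₀] T γ ∘ X := fun x₀ =>
    ((hX x₀).of_le h2).exists_eventuallyEq_affineMap_comp T ((hY x₀).of_le h2) (hsub x₀)
      (Eventually.of_forall fun x => mem_closure_iff_frequently.1 (hdense x))
  have hunique : ∀ x (γ γ' : Γ), Y =ᶠ[𝓝 x] T γ ∘ X → Y =ᶠ[𝓝 x] T γ' ∘ X → γ = γ' :=
    fun x γ γ' h h' => Subtype.ext <| AffineEquiv.toAffineMap_injective <|
      AffineMap.eq_of_eventuallyEq_comp ((hX x).mdifferentiableAt (by simp)) (hsub x)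
        (h.symm.trans h')
  exact exists_isLocallyConstant_of_eventually_unique (p := fun x γ => Y x = T γ (X x))
    hlocal hunique

/-- If `Γ` is a countable group of affine automorphisms of `ℝᵐ`, `X, Y : M → ℝᵐ`
are smooth maps from a manifold with `X` a submersion and `Y x` in the `Γ`-orbit of `X x` for
every `x`, then there is a locally constant map `α : M → Γ` with `Y x = α x (X x)` for all `x`. -/
theorem locally_constant_affine_cocycle
    {d m : ℕ}
    {M : Type*} [TopologicalSpace M] [ChartedSpace (EuclideanSpace ℝ (Fin d)) M]
    [IsManifold (𝓡 d) (⊤ : ℕ∞) M] [T2Space M] [SecondCountableTopology M]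
    (Γ : Subgroup (EuclideanSpace ℝ (Fin m) ≃ᵃ[ℝ] EuclideanSpace ℝ (Fin m)))
    (hΓ : Countable Γ)
    (X Y : M → EuclideanSpace ℝ (Fin m))
    (hX : ContMDiff (𝓡 d) (𝓡 m) (⊤ : ℕ∞) X) (hY : ContMDiff (𝓡 d) (𝓡 m) (⊤ : ℕ∞) Y)
    (hsub : ∀ x : M, Function.Surjective (mfderiv (𝓡 d) (𝓡 m) X x))
    (horb : ∀ x : M, ∃ γ ∈ Γ, Y x = γ (X x)) :
    ∃ α : M → Γ, IsLocallyConstant α ∧ ∀ x : M, Y x = (α x).val (X x) :=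
  locally_constant_affine_cocycle_general Γ hΓ X Y hX hY hsub horb
end

section
/- Let V ⊆ ℝⁿ be a nonempty connected open set and let f : V → ℝⁿ be a smooth map such that Df(x) is a linear isometry of ℝⁿ for every x ∈ V. Then there exists a unique isometry F of Euclidean space ℝⁿ such that f(x) = F(x) for all x ∈ V. -/
open scoped Topology RealInnerProductSpace
open Set


/-- A function with vanishing derivative on an open preconnected set is constant there. -/
theorem aux_const_of_fderiv_zero_s10 {E F : Type*} [NormedAddCommGroup E] [NormedSpace ℝ E]
    [NormedAddCommGroup F] [NormedSpace ℝ F] {V : Set E} (hV : IsOpen V)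
    (hVc : IsPreconnected V) {g : E → F}
    (hg : ∀ x ∈ V, DifferentiableAt ℝ g x) (hg' : ∀ x ∈ V, fderiv ℝ g x = 0)
    {x₀ : E} (hx₀ : x₀ ∈ V) : ∀ x ∈ V, g x = g x₀ := by
  have loc : ∀ x ∈ V, ∃ ε > 0, Metric.ball x ε ⊆ V ∧ ∀ y ∈ Metric.ball x ε, g y = g x := by
    intro x hx
    obtain ⟨ε, hε, hball⟩ := Metric.isOpen_iff.1 hV x hx
    refine ⟨ε, hε, hball, fun y hy => ?_⟩
    exact (convex_ball x ε).is_const_of_fderivWithin_eq_zero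
      (fun z hz => (hg z (hball hz)).differentiableWithinAt)
      (fun z hz => by
        rw [fderivWithin_of_isOpen Metric.isOpen_ball hz]; exact hg' z (hball hz))
      hy (Metric.mem_ball_self hε)
  set u : Set E := {x | x ∈ V ∧ g x = g x₀} with hu_def
  set v : Set E := {x | x ∈ V ∧ g x ≠ g x₀} with hv_def
  have hu : IsOpen u := by
    rw [Metric.isOpen_iff]
    rintro x ⟨hxV, hxg⟩
    obtain ⟨ε, hε, hball, hconst⟩ := loc x hxV
    exact ⟨ε, hε, fun y hy => ⟨hball hy, (hconst y hy).trans hxg⟩⟩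
  have hv : IsOpen v := by
    rw [Metric.isOpen_iff]
    rintro x ⟨hxV, hxg⟩
    obtain ⟨ε, hε, hball, hconst⟩ := loc x hxV
    exact ⟨ε, hε, fun y hy => ⟨hball hy, (hconst y hy).symm ▸ hxg⟩⟩
  have hsub : V ⊆ u := by
    apply hVc.subset_left_of_subset_union hu hv
    · rw [Set.disjoint_left]
      rintro x ⟨hxV, hxg⟩ ⟨_, hxg'⟩; exact hxg' hxg
    · intro x hx
      by_cases h : g x = g x₀
      · exact Or.inl ⟨hx, h⟩
      · exact Or.inr ⟨hx, h⟩
    · exact ⟨x₀, hx₀, hx₀, rfl⟩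
  exact fun x hx => (hsub hx).2


/-- Two isometry equivalences of a real normed space agreeing on a ball agree everywhere. -/
theorem aux_isometry_eq_of_eqOn_ball {E : Type*} [NormedAddCommGroup E] [NormedSpace ℝ E]
    (F G : E ≃ᵢ E) {x₀ : E} {ε : ℝ} (hε : 0 < ε)
    (h : ∀ y ∈ Metric.ball x₀ ε, G y = F y) : G = F := by
  have hGx : ∀ x : E, (G.toRealLinearIsometryEquiv : E → E) x = G x - G 0 :=
    fun x => G.toRealLinearIsometryEquiv_apply x
  have hFx : ∀ x : E, (F.toRealLinearIsometryEquiv : E → E) x = F x - F 0 :=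
    fun x => F.toRealLinearIsometryEquiv_apply x
  set LG := G.toRealLinearIsometryEquiv
  set LF := F.toRealLinearIsometryEquiv
  have hx₀ : x₀ ∈ Metric.ball x₀ ε := Metric.mem_ball_self hε
  have hsmall : ∀ v : E, ‖v‖ < ε → (LG : E → E) v = LF v := by
    intro v hv
    have h1 : x₀ + v ∈ Metric.ball x₀ ε := by
      simpa [Metric.mem_ball, dist_eq_norm] using hv
    have e1 := h (x₀ + v) h1
    have e0 := h x₀ hx₀
    have h2 : (LG : E → E) (x₀ + v) - LG x₀ = (LF : E → E) (x₀ + v) - LF x₀ := by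
      rw [hGx, hGx, hFx, hFx, e1, e0]
      abel
    rwa [map_add, map_add, add_sub_cancel_left, add_sub_cancel_left] at h2
  have hall : ∀ v : E, (LG : E → E) v = LF v := by
    intro v
    rcases eq_or_ne v 0 with rfl | hv
    · simp
    have hnv : (0:ℝ) < ‖v‖ := norm_pos_iff.mpr hv
    set t : ℝ := ε / (2 * ‖v‖) with ht
    have htpos : 0 < t := by positivity
    have hsm : ‖t • v‖ < ε := by
      rw [norm_smul, Real.norm_eq_abs, abs_of_pos htpos, ht]
      rw [div_mul_eq_mul_div]
      rw [div_lt_iff₀ (by positivity)]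
      nlinarith
    have hts := hsmall (t • v) hsm
    rw [map_smul, map_smul] at hts
    exact smul_right_injective E (ne_of_gt htpos) hts
  have h00 : G 0 = F 0 := by
    have e0 := h x₀ hx₀
    have hx := hall x₀
    rw [hGx, hFx, e0] at hx
    exact sub_right_injective hx
  refine IsometryEquiv.ext fun x => ?_
  have hx := hall x
  rw [hGx, hFx, h00] at hx
  exact sub_left_injective hx

abbrev Euc (n : ℕ) := EuclideanSpace ℝ (Fin n)

/-- A smooth map on a nonempty connected open subset of `ℝⁿ` whose derivative
is everywhere a linear isometry coincides on its domain with a unique isometry of `ℝⁿ`. -/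
theorem eq_isometry_of_deriv_isometry
    {n : ℕ} (V : Set (EuclideanSpace ℝ (Fin n)))
    (hV : IsOpen V) (hVconn : IsConnected V)
    (f : EuclideanSpace ℝ (Fin n) → EuclideanSpace ℝ (Fin n))
    (hf : ContDiffOn ℝ (⊤ : ℕ∞) f V)
    (hiso : ∀ x ∈ V, ∀ v : EuclideanSpace ℝ (Fin n), ‖fderivWithin ℝ f V x v‖ = ‖v‖) :
    ∃! F : EuclideanSpace ℝ (Fin n) ≃ᵢ EuclideanSpace ℝ (Fin n), ∀ x ∈ V, f x = F x := by
  classical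
  obtain ⟨x₀, hx₀⟩ := hVconn.nonempty
  have hiso' : ∀ x ∈ V, ∀ v : Euc n, ‖fderiv ℝ f x v‖ = ‖v‖ := by
    intro x hx v
    rw [← fderivWithin_of_isOpen hV hx]; exact hiso x hx v
  have hfC : ∀ x ∈ V, ContDiffAt ℝ (⊤ : ℕ∞) f x := fun x hx => hf.contDiffAt (hV.mem_nhds hx)
  set g : Euc n → (Euc n →L[ℝ] Euc n) := fderiv ℝ f with hg_def
  have hfdiff : ∀ x ∈ V, DifferentiableAt ℝ f x :=
    fun x hx => (hfC x hx).differentiableAt (by simp)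
  have hgdiff : ∀ x ∈ V, DifferentiableAt ℝ g x := by
    intro x hx
    exact ((hfC x hx).fderiv_right (m := 1) (WithTop.coe_le_coe.mpr le_top)).differentiableAt one_ne_zero
  have hinner : ∀ x ∈ V, ∀ u v : Euc n, ⟪g x u, g x v⟫ = ⟪u, v⟫ := by
    intro x hx u v
    exact LinearIsometry.inner_map_map ⟨(g x : Euc n →ₗ[ℝ] Euc n), hiso' x hx⟩ u v
  -- second derivative vanishes
  have hD0 : ∀ x ∈ V, fderiv ℝ g x = 0 := by
    intro x hx
    set D := fderiv ℝ g x with hD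
    have hsymm : ∀ v w : Euc n, D v w = D w v := (hfC x hx).isSymmSndFDerivAt (by
      rw [minSmoothness_of_isRCLikeNormedField]; exact WithTop.coe_le_coe.mpr le_top)
    have hgD : HasFDerivAt g D x := (hgdiff x hx).hasFDerivAt
    have key : ∀ u v w : Euc n, ⟪g x u, D w v⟫ + ⟪D w u, g x v⟫ = 0 := by
      intro u v w
      have h1 : HasFDerivAt (fun y => g y u) (D.flip u) x := by
        have := hgD.clm_apply (hasFDerivAt_const u x)
        simpa using this
      have h2 : HasFDerivAt (fun y => g y v) (D.flip v) x := by
        have := hgD.clm_apply (hasFDerivAt_const v x)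
        simpa using this
      have heq : (fun y : Euc n => ⟪g y u, g y v⟫) =ᶠ[𝓝 x] (fun _ => ⟪u, v⟫) := by
        filter_upwards [hV.mem_nhds hx] with y hy
        exact hinner y hy u v
      have hzero : fderiv ℝ (fun y : Euc n => ⟪g y u, g y v⟫) x = 0 := by
        rw [heq.fderiv_eq]
        exact fderiv_const_apply _
      have happ := fderiv_inner_apply ℝ h1.differentiableAt h2.differentiableAt w
      rw [h1.fderiv, h2.fderiv, hzero] at happ
      simp only [ContinuousLinearMap.zero_apply, ContinuousLinearMap.flip_apply] at happ
      linarith [happ]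
    have T0 : ∀ w u v : Euc n, ⟪D w u, g x v⟫ = 0 := by
      have anti : ∀ w u v : Euc n, ⟪D w u, g x v⟫ = -⟪D w v, g x u⟫ := by
        intro w u v
        have h := key v u w
        have hc := real_inner_comm ((g x) v) ((D w) u)
        linarith
      intro w u v
      have h1 : ⟪D w u, g x v⟫ = -⟪D w u, g x v⟫ := by
        calc ⟪D w u, g x v⟫ = ⟪D u w, g x v⟫ := by rw [hsymm w u]
          _ = -⟪D u v, g x w⟫ := anti u w v
          _ = -⟪D v u, g x w⟫ := by rw [hsymm u v]
          _ = ⟪D v w, g x u⟫ := by rw [anti v u w, neg_neg]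
          _ = ⟪D w v, g x u⟫ := by rw [hsymm v w]
          _ = -⟪D w u, g x v⟫ := anti w v u
      linarith
    have hsurj : Function.Surjective (g x) := by
      have : Function.Injective (g x : Euc n →ₗ[ℝ] Euc n) :=
        LinearIsometry.injective ⟨(g x : Euc n →ₗ[ℝ] Euc n), hiso' x hx⟩
      exact LinearMap.injective_iff_surjective.mp this
    refine ContinuousLinearMap.ext fun w => ContinuousLinearMap.ext fun u => ?_
    obtain ⟨v, hv⟩ := hsurj (D w u)
    have := T0 w u v
    rw [hv, real_inner_self_eq_norm_sq] at this
    have hn : ‖D w u‖ = 0 := by nlinarith [norm_nonneg (D w u)]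
    simpa using norm_eq_zero.mp hn
  -- g is constant
  have hgconst : ∀ x ∈ V, g x = g x₀ :=
    aux_const_of_fderiv_zero_s10 hV hVconn.isPreconnected hgdiff hD0 hx₀
  set A : Euc n →L[ℝ] Euc n := g x₀ with hA
  -- f x = A x + c on V
  have hh : ∀ x ∈ V, f x - A x = f x₀ - A x₀ := by
    apply aux_const_of_fderiv_zero_s10 hV hVconn.isPreconnected
      (g := fun y : Euc n => f y - A y) ?_ ?_ hx₀
    · exact fun x hx => (hfdiff x hx).sub (A.differentiableAt)
    · intro x hx
      rw [fderiv_fun_sub (hfdiff x hx) A.differentiableAt, A.fderiv, ← hg_def, hgconst x hx,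
        sub_self]
  set c : Euc n := f x₀ - A x₀ with hc
  -- construct the isometry
  let li : Euc n →ₗᵢ[ℝ] Euc n := ⟨(A : Euc n →ₗ[ℝ] Euc n), hiso' x₀ hx₀⟩
  have hsurj : Function.Surjective li := LinearMap.injective_iff_surjective.mp li.injective
  let Aeq := LinearIsometryEquiv.ofSurjective li hsurj
  let F : Euc n ≃ᵢ Euc n := Aeq.toIsometryEquiv.trans (IsometryEquiv.addRight c)
  have hFapp : ∀ x : Euc n, F x = A x + c := by
    intro x
    show (IsometryEquiv.addRight c) (Aeq x) = A x + c
    have : Aeq x = A x := by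
      simp [Aeq, LinearIsometryEquiv.coe_ofSurjective, li]
    rw [this]
    rfl
  have hagree : ∀ x ∈ V, f x = F x := by
    intro x hx
    rw [hFapp x]
    exact sub_eq_iff_eq_add'.mp (hh x hx)
  refine ⟨F, hagree, ?_⟩
  intro G hG
  have hFG : ∀ x ∈ V, G x = F x := fun x hx => (hG x hx).symm.trans (hagree x hx)
  obtain ⟨ε, hε, hball⟩ := Metric.isOpen_iff.1 hV x₀ hx₀
  exact aux_isometry_eq_of_eqOn_ball F G hε (fun y hy => hFG y (hball hy))
end
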